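/- Let d ≥ 1, let U ⊆ ℝ^d be open, and let E be a bounded connected component of ℝ^d \ U. Then there exists a bounded full domain G ⊆ ℝ^d such that E ⊆ G and ∂G ⊆ U. -/

import Mathlib

/-!
A bounded component `E` of the closed set `Uᶜ` is compact, so by the Šura-Bura separation
argument (components of a compact Hausdorff space are intersections of clopen sets) it has a
relatively compact open neighbourhood `V` whose boundary misses `Uᶜ`. The component `C` of `V`
containing `E` is a bounded domain with `∂C ⊆ ∂V ⊆ U`. Filling in the bounded components of
`Cᶜ` gives `G = T(C)`: it is open because the same separation argument shows that points of `Cᶜ`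
near a bounded component of `Cᶜ` have bounded components, connected because every component of
`Cᶜ` touches `closure C`, and it is full with `∂G ⊆ ∂C`.
-/

/-- The topological hull `T(G)` of a set `G ⊆ ℝ^d`: the union of `G` with the
bounded connected components of the complement `ℝ^d \ G`. -/
def topHull {d : ℕ} (G : Set (EuclideanSpace ℝ (Fin d))) : Set (EuclideanSpace ℝ (Fin d)) :=
  G ∪ {x | x ∈ Gᶜ ∧ Bornology.IsBounded (connectedComponentIn Gᶜ x)}

open Set Metric Bornology

section Topology

variable {X : Type*} [TopologicalSpace X]

theorem IsClosed.connectedComponentIn {F : Set X} (hF : IsClosed F) (x : X) :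
    IsClosed (connectedComponentIn F x) := by
  by_cases hx : x ∈ F
  · rw [connectedComponentIn_eq_image hx]
    exact hF.isClosedEmbedding_subtypeVal.isClosedMap _ isClosed_connectedComponent
  · rw [connectedComponentIn_eq_empty hx]
    exact isClosed_empty

theorem frontier_connectedComponentIn_subset [LocallyConnectedSpace X] {V : Set X}
    (hV : IsOpen V) (x : X) : frontier (connectedComponentIn V x) ⊆ frontier V := by
  intro z hz
  rw [hV.connectedComponentIn.frontier_eq] at hz
  obtain ⟨hz_cl, hz_not⟩ := hz
  refine ⟨closure_mono (connectedComponentIn_subset V x) hz_cl, fun hzV => hz_not ?_⟩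
  rw [hV.interior_eq] at hzV
  obtain ⟨w, hwz, hwx⟩ := mem_closure_iff.1 hz_cl _ hV.connectedComponentIn
    (mem_connectedComponentIn hzV)
  rw [← (connectedComponentIn_eq hwz).trans (connectedComponentIn_eq hwx).symm]
  exact mem_connectedComponentIn hzV

theorem exists_isClopen_of_disjoint_connectedComponent [T2Space X] [CompactSpace X] {x : X}
    {K : Set X} (hK : IsClosed K) (h : Disjoint (connectedComponent x) K) :
    ∃ Z, IsClopen Z ∧ x ∈ Z ∧ Disjoint Z K := by
  rw [connectedComponent_eq_iInter_isClopen, disjoint_iff_inter_eq_empty, inter_comm] at h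
  obtain ⟨t, ht⟩ := hK.isCompact.elim_finite_subfamily_closed _
    (fun s : {s : Set X // IsClopen s ∧ x ∈ s} => s.2.1.1) h
  refine ⟨⋂ s ∈ t, s, isClopen_biInter_finset fun s _ => s.2.1,
    mem_iInter₂.2 fun s _ => s.2.2, ?_⟩
  rw [disjoint_iff_inter_eq_empty, inter_comm, ht]

theorem exists_isOpen_isCompact_inter_of_isCompact_connectedComponentIn [T2Space X]
    [LocallyCompactSpace X] {F : Set X} (hF : IsClosed F) {x : X} (hx : x ∈ F)
    (hD : IsCompact (connectedComponentIn F x)) :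
    ∃ N, IsOpen N ∧ IsCompact (F ∩ N) ∧ connectedComponentIn F x ⊆ N := by
  obtain ⟨K, hK, hDK⟩ := exists_compact_superset hD
  set D := connectedComponentIn F x
  have hxD : x ∈ D := mem_connectedComponentIn hx
  have hDFK : D ⊆ F ∩ K :=
    subset_inter (connectedComponentIn_subset F x) (hDK.trans interior_subset)
  have hD_eq : connectedComponentIn (F ∩ K) x = D :=
    (connectedComponentIn_mono x inter_subset_left).antisymm
      (isPreconnected_connectedComponentIn.subset_connectedComponentIn hxD hDFK)
  have : CompactSpace ↥(F ∩ K) := isCompact_iff_compactSpace.1 (hK.inter_left hF)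
  set p : ↥(F ∩ K) := ⟨x, hDFK hxD⟩
  have himg : Subtype.val '' connectedComponent p = D := by
    rw [← connectedComponentIn_eq_image, hD_eq]
  have hp : Disjoint (connectedComponent p) (Subtype.val ⁻¹' (interior K)ᶜ) := by
    rw [preimage_compl, disjoint_compl_right_iff_subset, ← image_subset_iff, himg]
    exact hDK
  -- a clopen piece of `F ∩ K` around `D` that misses `∂K` is relatively open in `F`
  obtain ⟨Z, hZ, hpZ, hZK⟩ := exists_isClopen_of_disjoint_connectedComponent
    (isOpen_interior.isClosed_compl.preimage continuous_subtype_val) hp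
  obtain ⟨O, hO, rfl⟩ := isOpen_induced_iff.1 hZ.isOpen
  have hFN :
      F ∩ (O ∩ interior K) = Subtype.val '' (Subtype.val ⁻¹' O : Set ↥(F ∩ K)) := by
    ext z
    constructor
    · rintro ⟨hzF, hzO, hzK⟩
      exact ⟨⟨z, hzF, interior_subset hzK⟩, hzO, rfl⟩
    · rintro ⟨q, hqO, rfl⟩
      exact ⟨q.2.1, hqO, not_not.1 fun hq => disjoint_left.1 hZK hqO hq⟩
  refine ⟨O ∩ interior K, hO.inter isOpen_interior, ?_, fun z hz => ⟨?_, hDK hz⟩⟩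
  · rw [hFN]
    exact hZ.isClosed.isCompact.image continuous_subtype_val
  · rw [← himg] at hz
    obtain ⟨q, hq, rfl⟩ := hz
    exact hZ.connectedComponent_subset hpZ hq

theorem exists_isOpen_frontier_subset_of_isCompact_connectedComponentIn [T2Space X]
    [LocallyCompactSpace X] {U : Set X} (hU : IsOpen U) {x : X} (hx : x ∈ Uᶜ)
    (hD : IsCompact (connectedComponentIn Uᶜ x)) :
    ∃ V, IsOpen V ∧ IsCompact (closure V) ∧ connectedComponentIn Uᶜ x ⊆ V ∧
      frontier V ⊆ U := by
  obtain ⟨N, hN, hNc, hDN⟩ :=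
    exists_isOpen_isCompact_inter_of_isCompact_connectedComponentIn hU.isClosed_compl hx hD
  obtain ⟨V, hV, hNV, hVNU, hVc⟩ := exists_open_between_and_isCompact_closure hNc (hN.union hU)
    (fun z hz => Or.inl hz.2)
  refine ⟨V, hV, hVc, fun z hz => hNV ⟨connectedComponentIn_subset _ x hz, hDN hz⟩, ?_⟩
  rintro z ⟨hz_cl, hz_not⟩
  rw [hV.interior_eq] at hz_not
  refine (hVNU hz_cl).elim (fun hzN => ?_) id
  by_contra hzU
  exact hz_not (hNV ⟨hzU, hzN⟩)

theorem connectedComponentIn_compl_subset_of_frontier_subset {U V : Set X} (hV : IsOpen V)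
    (hVU : frontier V ⊆ U) {y : X} (hy : y ∈ Uᶜ ∩ V) :
    connectedComponentIn Uᶜ y ⊆ V := by
  refine isPreconnected_connectedComponentIn.subset_left_of_subset_union hV
    isClosed_closure.isOpen_compl (disjoint_compl_right.mono_right
      (compl_subset_compl.2 subset_closure)) (fun z hz => ?_)
    ⟨y, mem_connectedComponentIn hy.1, hy.2⟩
  by_contra hz'
  rw [mem_union, not_or, notMem_compl_iff] at hz'
  have hz_fr : z ∈ frontier V := ⟨hz'.2, hV.interior_eq.symm ▸ hz'.1⟩
  exact connectedComponentIn_subset _ y hz (hVU hz_fr)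

theorem connectedComponentIn_compl_inter_closure_nonempty [LocallyConnectedSpace X]
    [ConnectedSpace X] {C : Set X} (hCo : IsOpen C) (hC : C.Nonempty) {y : X} (hy : y ∈ Cᶜ) :
    (connectedComponentIn Cᶜ y ∩ closure C).Nonempty := by
  by_contra h
  rw [not_nonempty_iff_eq_empty, ← disjoint_iff_inter_eq_empty] at h
  set D := connectedComponentIn Cᶜ y
  have hyD : y ∈ D := mem_connectedComponentIn hy
  -- away from `closure C`, the component `D` is a component of an open set, hence open
  have hD_eq : connectedComponentIn (closure C)ᶜ y = D :=
    (connectedComponentIn_mono y (compl_subset_compl.2 subset_closure)).antisymm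
      (isPreconnected_connectedComponentIn.subset_connectedComponentIn hyD h.subset_compl_right)
  have hD : IsClopen D := ⟨hCo.isClosed_compl.connectedComponentIn y,
    hD_eq ▸ isClosed_closure.isOpen_compl.connectedComponentIn⟩
  obtain ⟨z, hz⟩ := hC
  exact absurd hz (connectedComponentIn_subset _ y (hD.eq_univ ⟨y, hyD⟩ ▸ mem_univ z))

theorem isPreconnected_union_connectedComponentIn_compl [LocallyConnectedSpace X]
    [ConnectedSpace X] {C : Set X} (hCo : IsOpen C) (hC : IsConnected C) {y : X} (hy : y ∈ Cᶜ) :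
    IsPreconnected (C ∪ connectedComponentIn Cᶜ y) := by
  obtain ⟨z, hzD, hzC⟩ := connectedComponentIn_compl_inter_closure_nonempty hCo hC.nonempty hy
  have hCz : IsPreconnected (insert z C) :=
    hC.isPreconnected.subset_closure (subset_insert z C) (insert_subset hzC subset_closure)
  have := hCz.union z (mem_insert z C) hzD isPreconnected_connectedComponentIn
  rwa [insert_union, insert_eq_of_mem (mem_union_right C hzD)] at this

end Topology

theorem not_isBounded_connectedComponentIn_compl {E : Type*} [NormedAddCommGroup E]
    [NormedSpace ℝ E] {C : Set E} {R : ℝ} (hR : 0 < R) (hC : C ⊆ ball 0 R) {x : E}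
    (hx : R ≤ ‖x‖) : ¬IsBounded (connectedComponentIn Cᶜ x) := by
  have hx0 : 0 < ‖x‖ := hR.trans_le hx
  have hnorm : ∀ t : ℝ, 1 ≤ t → ‖t • x‖ = t * ‖x‖ := fun t ht => by
    rw [norm_smul, Real.norm_of_nonneg (zero_le_one.trans ht)]
  set ray := (fun t : ℝ => t • x) '' Ici 1
  have hray : ray ⊆ connectedComponentIn Cᶜ x := by
    refine (isPreconnected_Ici.image (fun t : ℝ => t • x) (by fun_prop))
      |>.subset_connectedComponentIn ⟨1, mem_Ici.2 le_rfl, one_smul ℝ x⟩ ?_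
    rintro _ ⟨t, ht, rfl⟩ hmem
    have := mem_ball_zero_iff.1 (hC hmem)
    rw [hnorm t ht] at this
    nlinarith [mem_Ici.1 ht]
  intro hb
  obtain ⟨r, hr⟩ := isBounded_iff_forall_norm_le.1 (hb.subset hray)
  set t := max 1 ((r + 1) / ‖x‖)
  have ht := hr _ ⟨t, mem_Ici.2 (le_max_left _ _), rfl⟩
  rw [hnorm t (le_max_left _ _)] at ht
  have : (r + 1) / ‖x‖ * ‖x‖ ≤ t * ‖x‖ := by gcongr; exact le_max_right _ _
  rw [div_mul_cancel₀ _ hx0.ne'] at this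
  linarith

section TopHull

variable {d : ℕ} {C : Set (EuclideanSpace ℝ (Fin d))}

theorem subset_topHull : C ⊆ topHull C := subset_union_left

theorem notMem_topHull_iff {x : EuclideanSpace ℝ (Fin d)} :
    x ∉ topHull C ↔ x ∈ Cᶜ ∧ ¬IsBounded (connectedComponentIn Cᶜ x) := by
  simp only [topHull, mem_union, mem_ofPred_eq, not_or, not_and, mem_compl_iff]
  tauto

theorem connectedComponentIn_compl_subset_compl_topHull {x : EuclideanSpace ℝ (Fin d)}
    (hx : x ∉ topHull C) : connectedComponentIn Cᶜ x ⊆ (topHull C)ᶜ := by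
  obtain ⟨-, hx⟩ := notMem_topHull_iff.1 hx
  intro z hz
  exact notMem_topHull_iff.2
    ⟨connectedComponentIn_subset _ x hz, connectedComponentIn_eq hz ▸ hx⟩

theorem isBounded_topHull (hC : IsBounded C) : IsBounded (topHull C) := by
  obtain ⟨R, hR, hCR⟩ := hC.subset_ball_lt 0 0
  refine (isBounded_ball (x := 0) (r := R)).subset ?_
  rintro x (hx | ⟨-, hb⟩)
  · exact hCR hx
  · exact mem_ball_zero_iff.2 (lt_of_not_ge fun h =>
      not_isBounded_connectedComponentIn_compl hR hCR h hb)

theorem topHull_topHull : topHull (topHull C) = topHull C := by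
  refine subset_antisymm ?_ subset_topHull
  rintro x (hx | ⟨hx, hb⟩)
  · exact hx
  by_contra hx'
  refine (notMem_topHull_iff.1 hx').2 (hb.subset ?_)
  exact isPreconnected_connectedComponentIn.subset_connectedComponentIn
    (mem_connectedComponentIn (notMem_topHull_iff.1 hx').1)
    (connectedComponentIn_compl_subset_compl_topHull hx')

theorem isOpen_topHull (hCo : IsOpen C) : IsOpen (topHull C) := by
  refine isOpen_iff_forall_mem_open.2 ?_
  rintro x (hx | ⟨hx, hb⟩)
  · exact ⟨C, subset_topHull, hCo, hx⟩
  obtain ⟨V, hV, hVc, hxV, hVC⟩ :=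
    exists_isOpen_frontier_subset_of_isCompact_connectedComponentIn hCo hx
      (isCompact_of_isClosed_isBounded (hCo.isClosed_compl.connectedComponentIn x) hb)
  refine ⟨V, fun y hy => ?_, hV, hxV (mem_connectedComponentIn hx)⟩
  by_cases hyC : y ∈ C
  · exact subset_topHull hyC
  have hyV := connectedComponentIn_compl_subset_of_frontier_subset hV hVC ⟨hyC, hy⟩
  exact Or.inr ⟨hyC, hVc.isBounded.subset (hyV.trans subset_closure)⟩

theorem isConnected_topHull (hCo : IsOpen C) (hC : IsConnected C) : IsConnected (topHull C) := by
  obtain ⟨x₀, hx₀⟩ := hC.nonempty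
  refine ⟨⟨x₀, subset_topHull hx₀⟩, isPreconnected_of_forall x₀ fun y hy => ?_⟩
  rcases hy with hy | ⟨hyC, hyb⟩
  · exact ⟨C, subset_topHull, hx₀, hy, hC.isPreconnected⟩
  refine ⟨C ∪ connectedComponentIn Cᶜ y, union_subset subset_topHull fun z hz => ?_,
    Or.inl hx₀, Or.inr (mem_connectedComponentIn hyC),
    isPreconnected_union_connectedComponentIn_compl hCo hC hyC⟩
  exact Or.inr ⟨connectedComponentIn_subset _ y hz, connectedComponentIn_eq hz ▸ hyb⟩

theorem frontier_topHull_subset (hCo : IsOpen C) : frontier (topHull C) ⊆ frontier C := by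
  rintro x ⟨hx_cl, hx_not⟩
  rw [(isOpen_topHull hCo).interior_eq] at hx_not
  refine ⟨?_, fun hxC => hx_not (subset_topHull (interior_subset hxC))⟩
  by_contra hx
  -- the component of `x` in the open set `(closure C)ᶜ` is a neighbourhood of `x` missing `T(C)`
  obtain ⟨y, hy, hyT⟩ := mem_closure_iff.1 hx_cl _
    isClosed_closure.isOpen_compl.connectedComponentIn (mem_connectedComponentIn hx)
  exact connectedComponentIn_compl_subset_compl_topHull hx_not
    (connectedComponentIn_mono x (compl_subset_compl.2 subset_closure) hy) hyT

end TopHull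

theorem exists_bounded_full_domain_around_component_general {d : ℕ}
    (U : Set (EuclideanSpace ℝ (Fin d))) (hUopen : IsOpen U)
    (E : Set (EuclideanSpace ℝ (Fin d))) (x₀ : EuclideanSpace ℝ (Fin d))
    (hx₀ : x₀ ∈ Uᶜ) (hE : E = connectedComponentIn Uᶜ x₀)
    (hEbdd : Bornology.IsBounded E) :
    ∃ G : Set (EuclideanSpace ℝ (Fin d)),
      IsOpen G ∧ IsConnected G ∧ Bornology.IsBounded G ∧ topHull G = G ∧
        E ⊆ G ∧ frontier G ⊆ U := by
  have hEc : IsCompact (connectedComponentIn Uᶜ x₀) := isCompact_of_isClosed_isBounded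
    (hUopen.isClosed_compl.connectedComponentIn x₀) (hE ▸ hEbdd)
  obtain ⟨V, hVo, hVc, hEV, hVU⟩ :=
    exists_isOpen_frontier_subset_of_isCompact_connectedComponentIn hUopen hx₀ hEc
  set C := connectedComponentIn V x₀
  have hCo : IsOpen C := hVo.connectedComponentIn
  have hC : IsConnected C :=
    isConnected_connectedComponentIn_iff.2 (hEV (mem_connectedComponentIn hx₀))
  have hEC : E ⊆ C := hE ▸ isPreconnected_connectedComponentIn.subset_connectedComponentIn
    (mem_connectedComponentIn hx₀) hEV
  refine ⟨topHull C, isOpen_topHull hCo, isConnected_topHull hCo hC, isBounded_topHull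
    (hVc.isBounded.subset ((connectedComponentIn_subset V x₀).trans subset_closure)),
    topHull_topHull, hEC.trans subset_topHull, ?_⟩
  exact (frontier_topHull_subset hCo).trans
    ((frontier_connectedComponentIn_subset hVo x₀).trans hVU)

/-- Let `d ≥ 1`, let `U ⊆ ℝ^d` be open, and let `E` be a bounded connected component
of `ℝ^d \ U`. Then there is a bounded full domain `G` with `E ⊆ G` and `∂G ⊆ U`. -/
theorem exists_bounded_full_domain_around_component {d : ℕ} (hd : 1 ≤ d)
    (U : Set (EuclideanSpace ℝ (Fin d))) (hUopen : IsOpen U)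
    (E : Set (EuclideanSpace ℝ (Fin d))) (x₀ : EuclideanSpace ℝ (Fin d))
    (hx₀ : x₀ ∈ Uᶜ) (hE : E = connectedComponentIn Uᶜ x₀)
    (hEbdd : Bornology.IsBounded E) :
    ∃ G : Set (EuclideanSpace ℝ (Fin d)),
      IsOpen G ∧ IsConnected G ∧ Bornology.IsBounded G ∧ topHull G = G ∧
        E ⊆ G ∧ frontier G ⊆ U :=
  exists_bounded_full_domain_around_component_general U hUopen E x₀ hx₀ hE hEbdd
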